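/- arXiv:1110.2007 — 5 statements merged into one kernel-verified Lean document; each statement's English description precedes it below -/
import Mathlib

section
/- Let M < r₀ < r₁ and ψ : [M, r₁] → ℝ be continuously differentiable. Then there exists a constant C > 0 depending only on M, r₀, r₁ such that ∫_M^{r₀} ψ(ρ)² dρ ≤ C ∫_{r₀}^{r₁} ψ(ρ)² dρ + C ∫_M^{r₁} (ρ − M)² (ψ'(ρ))² dρ. -/
/-!
Integrating `((ρ - c) ψ²)' = ψ² + 2 (ρ - c) ψ ψ'` over an interval expresses `∫ ψ²` as a boundary
term minus a cross term, and AM-GM splits the cross term into `∫ ψ²` and the degenerate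
`∫ (ρ - c)² ψ'²`. With `c = M` on `[M, r₀]` the boundary term at `M` vanishes, so `∫_M^{r₀} ψ²` is
controlled by `(r₀ - M) ψ(r₀)²`; with `c = r₁` on `[r₀, r₁]` the same identity, read the other way,
controls `(r₁ - r₀) ψ(r₀)²` by `∫_{r₀}^{r₁} ψ²` and `∫ (ρ - r₁)² ψ'²`, and `(r₁ - ρ) ≲ (ρ - M)` there.
-/

open MeasureTheory Set

lemma abs_integral_two_mul_le {u v : ℝ → ℝ} {a b ε : ℝ} (hab : a ≤ b) (hε : 0 < ε)
    (hu : ContinuousOn u (Icc a b)) (hv : ContinuousOn v (Icc a b)) :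
    |∫ x in a..b, 2 * u x * v x| ≤ ε * (∫ x in a..b, u x ^ 2) + ε⁻¹ * ∫ x in a..b, v x ^ 2 := by
  have hu2 : IntervalIntegrable (fun x => ε * u x ^ 2) volume a b :=
    (continuousOn_const.mul (hu.pow 2)).intervalIntegrable_of_Icc hab
  have hv2 : IntervalIntegrable (fun x => ε⁻¹ * v x ^ 2) volume a b :=
    (continuousOn_const.mul (hv.pow 2)).intervalIntegrable_of_Icc hab
  rw [← intervalIntegral.integral_const_mul, ← intervalIntegral.integral_const_mul,
    ← intervalIntegral.integral_add hu2 hv2]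
  refine (intervalIntegral.abs_integral_le_integral_abs hab).trans <|
    intervalIntegral.integral_mono_on hab ?_ (hu2.add hv2) fun x _ => ?_
  · exact (((continuousOn_const.mul hu).mul hv).abs).intervalIntegrable_of_Icc hab
  · refine abs_le.2 ⟨?_, two_mul_le_add_mul_sq hε⟩
    have := two_mul_le_add_mul_sq (a := -u x) (b := v x) hε
    rw [neg_sq] at this
    linarith

section

variable {ψ ψ' : ℝ → ℝ} {a b : ℝ}

lemma integral_sq_add_integral_two_mul_eq (c : ℝ) (hab : a ≤ b)
    (hψ : ContinuousOn ψ (Icc a b)) (hψ' : ContinuousOn ψ' (Icc a b))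
    (hd : ∀ x ∈ Ioo a b, HasDerivAt ψ (ψ' x) x) :
    (∫ x in a..b, ψ x ^ 2) + ∫ x in a..b, 2 * ψ x * ((x - c) * ψ' x) =
      (b - c) * ψ b ^ 2 - (a - c) * ψ a ^ 2 := by
  have h₁ : IntervalIntegrable (fun x => ψ x ^ 2) volume a b :=
    (hψ.pow 2).intervalIntegrable_of_Icc hab
  have h₂ : IntervalIntegrable (fun x => 2 * ψ x * ((x - c) * ψ' x)) volume a b :=
    ContinuousOn.intervalIntegrable_of_Icc hab (by fun_prop)
  rw [← intervalIntegral.integral_add h₁ h₂]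
  refine intervalIntegral.integral_eq_sub_of_hasDerivAt_of_le (f := fun x => (x - c) * ψ x ^ 2)
    hab (by fun_prop) (fun x hx => ?_) (h₁.add h₂)
  refine (((hasDerivAt_id' x).sub_const c).mul ((hd x hx).pow 2)).congr_deriv ?_
  simp only [Pi.pow_apply, Nat.cast_ofNat]
  ring

lemma integral_sq_le_boundary_add_weighted_deriv (c : ℝ) (hab : a ≤ b)
    (hψ : ContinuousOn ψ (Icc a b)) (hψ' : ContinuousOn ψ' (Icc a b))
    (hd : ∀ x ∈ Ioo a b, HasDerivAt ψ (ψ' x) x) :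
    ∫ x in a..b, ψ x ^ 2 ≤
      2 * ((b - c) * ψ b ^ 2 - (a - c) * ψ a ^ 2) + 4 * ∫ x in a..b, (x - c) ^ 2 * ψ' x ^ 2 := by
  have hcross := abs_integral_two_mul_le (v := fun x => (x - c) * ψ' x) hab
    (inv_pos.2 two_pos) hψ (by fun_prop)
  simp only [mul_pow, inv_inv] at hcross
  linarith [integral_sq_add_integral_two_mul_eq c hab hψ hψ' hd, (abs_le.1 hcross).1]

lemma boundary_le_integral_sq_add_weighted_deriv (c : ℝ) (hab : a ≤ b)
    (hψ : ContinuousOn ψ (Icc a b)) (hψ' : ContinuousOn ψ' (Icc a b))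
    (hd : ∀ x ∈ Ioo a b, HasDerivAt ψ (ψ' x) x) :
    (b - c) * ψ b ^ 2 - (a - c) * ψ a ^ 2 ≤
      2 * (∫ x in a..b, ψ x ^ 2) + ∫ x in a..b, (x - c) ^ 2 * ψ' x ^ 2 := by
  have hcross := abs_integral_two_mul_le (v := fun x => (x - c) * ψ' x) hab
    one_pos hψ (by fun_prop)
  simp only [mul_pow, inv_one, one_mul] at hcross
  linarith [integral_sq_add_integral_two_mul_eq c hab hψ hψ' hd, (abs_le.1 hcross).2]

end

lemma sq_sub_le_sq_div_mul_sq_sub {M r₀ r₁ x : ℝ} (h0 : M < r₀) (hx : x ∈ Icc r₀ r₁) :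
    (x - r₁) ^ 2 ≤ ((r₁ - r₀) / (r₀ - M)) ^ 2 * (x - M) ^ 2 := by
  have hdist : r₁ - x ≤ (r₁ - r₀) / (r₀ - M) * (x - M) := by
    rw [div_mul_eq_mul_div, le_div_iff₀ (sub_pos.2 h0)]
    nlinarith [hx.1, hx.2]
  calc (x - r₁) ^ 2 = (r₁ - x) ^ 2 := by ring
    _ ≤ ((r₁ - r₀) / (r₀ - M) * (x - M)) ^ 2 := pow_le_pow_left₀ (by linarith [hx.2]) hdist 2
    _ = _ := mul_pow _ _ _

section

variable {ψ ψ' : ℝ → ℝ} {M r₀ r₁ : ℝ}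

lemma sq_mul_le_integral_sq_add_weighted_deriv (h0 : M < r₀) (h1 : r₀ ≤ r₁)
    (hψ : ContinuousOn ψ (Icc r₀ r₁)) (hψ' : ContinuousOn ψ' (Icc r₀ r₁))
    (hd : ∀ x ∈ Ioo r₀ r₁, HasDerivAt ψ (ψ' x) x) :
    (r₁ - r₀) * ψ r₀ ^ 2 ≤ 2 * (∫ x in r₀..r₁, ψ x ^ 2) +
      ((r₁ - r₀) / (r₀ - M)) ^ 2 * ∫ x in r₀..r₁, (x - M) ^ 2 * ψ' x ^ 2 := by
  have htrace := boundary_le_integral_sq_add_weighted_deriv r₁ h1 hψ hψ' hd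
  have hweight : ∫ x in r₀..r₁, (x - r₁) ^ 2 * ψ' x ^ 2 ≤
      ((r₁ - r₀) / (r₀ - M)) ^ 2 * ∫ x in r₀..r₁, (x - M) ^ 2 * ψ' x ^ 2 := by
    rw [← intervalIntegral.integral_const_mul]
    refine intervalIntegral.integral_mono_on h1 ?_ ?_ fun x hx => ?_
    · exact ContinuousOn.intervalIntegrable_of_Icc h1 (by fun_prop)
    · exact ContinuousOn.intervalIntegrable_of_Icc h1 (by fun_prop)
    · rw [← mul_assoc]
      exact mul_le_mul_of_nonneg_right (sq_sub_le_sq_div_mul_sq_sub h0 hx) (sq_nonneg _)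
  simp only [sub_self, zero_mul, zero_sub] at htrace
  linarith

noncomputable def hardyConst (M r₀ r₁ : ℝ) : ℝ :=
  4 * ((r₀ - M) / (r₁ - r₀)) + 2 * ((r₁ - r₀) / (r₀ - M)) + 4

lemma hardyConst_pos (h0 : M < r₀) (h1 : r₀ < r₁) : 0 < hardyConst M r₀ r₁ := by
  have := sub_pos.2 h0
  have := sub_pos.2 h1
  unfold hardyConst
  positivity

lemma integral_sq_le_hardyConst_mul (h0 : M < r₀) (h1 : r₀ < r₁)
    (hψ : ContinuousOn ψ (Icc M r₁)) (hψ' : ContinuousOn ψ' (Icc M r₁))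
    (hd : ∀ x ∈ Ioo M r₁, HasDerivAt ψ (ψ' x) x) :
    ∫ x in M..r₀, ψ x ^ 2 ≤ hardyConst M r₀ r₁ * (∫ x in r₀..r₁, ψ x ^ 2) +
      hardyConst M r₀ r₁ * ∫ x in M..r₁, (x - M) ^ 2 * ψ' x ^ 2 := by
  have hleft : Icc M r₀ ⊆ Icc M r₁ := Icc_subset_Icc_right h1.le
  have hright : Icc r₀ r₁ ⊆ Icc M r₁ := Icc_subset_Icc_left h0.le
  have hardy := integral_sq_le_boundary_add_weighted_deriv M h0.le (hψ.mono hleft)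
    (hψ'.mono hleft) fun x hx => hd x ⟨hx.1, hx.2.trans h1⟩
  have trace := sq_mul_le_integral_sq_add_weighted_deriv h0 h1.le (hψ.mono hright)
    (hψ'.mono hright) fun x hx => hd x ⟨h0.trans hx.1, hx.2⟩
  simp only [sub_self, zero_mul, sub_zero] at hardy
  have hweighted : ContinuousOn (fun x => (x - M) ^ 2 * ψ' x ^ 2) (Icc M r₁) := by fun_prop
  rw [← intervalIntegral.integral_add_adjacent_intervals
    ((hweighted.mono hleft).intervalIntegrable_of_Icc h0.le)
    ((hweighted.mono hright).intervalIntegrable_of_Icc h1.le)]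
  set I₁ := ∫ x in r₀..r₁, ψ x ^ 2
  set J₀ := ∫ x in M..r₀, (x - M) ^ 2 * ψ' x ^ 2
  set J₁ := ∫ x in r₀..r₁, (x - M) ^ 2 * ψ' x ^ 2
  have hI₁ : 0 ≤ I₁ := intervalIntegral.integral_nonneg h1.le fun x _ => sq_nonneg _
  have hJ₀ : 0 ≤ J₀ := intervalIntegral.integral_nonneg h0.le fun x _ => by positivity
  have hJ₁ : 0 ≤ J₁ := intervalIntegral.integral_nonneg h1.le fun x _ => by positivity
  set L := (r₀ - M) / (r₁ - r₀)
  set K := (r₁ - r₀) / (r₀ - M)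
  have hL : 0 ≤ L := div_nonneg (sub_pos.2 h0).le (sub_pos.2 h1).le
  have hK : 0 ≤ K := div_nonneg (sub_pos.2 h1).le (sub_pos.2 h0).le
  have hLK : L * K = 1 := by
    simp only [L, K]
    field_simp [(sub_pos.2 h0).ne', (sub_pos.2 h1).ne']
  calc ∫ x in M..r₀, ψ x ^ 2
      ≤ 2 * (L * ((r₁ - r₀) * ψ r₀ ^ 2)) + 4 * J₀ := by
        convert hardy using 3
        simp only [L]
        field_simp [(sub_pos.2 h1).ne']
    _ ≤ 2 * (L * (2 * I₁ + K ^ 2 * J₁)) + 4 * J₀ := by gcongr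
    _ = 4 * L * I₁ + 2 * (L * K) * K * J₁ + 4 * J₀ := by ring
    _ ≤ hardyConst M r₀ r₁ * I₁ + hardyConst M r₀ r₁ * (J₀ + J₁) := by
        rw [hLK, hardyConst]
        nlinarith [mul_nonneg hL hJ₀, mul_nonneg hL hJ₁, mul_nonneg hK hI₁, mul_nonneg hK hJ₀]

end

/-- Third Hardy inequality (1-dimensional version). -/
theorem third_hardy_one_dim (M r₀ r₁ : ℝ) (h0 : M < r₀) (h1 : r₀ < r₁) :
    ∃ C > (0:ℝ), ∀ ψ : ℝ → ℝ, ContDiffOn ℝ 1 ψ (Set.Icc M r₁) →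
      (∫ ρ in M..r₀, ψ ρ ^ 2) ≤
        C * (∫ ρ in r₀..r₁, ψ ρ ^ 2) + C * ∫ ρ in M..r₁, (ρ - M) ^ 2 * deriv ψ ρ ^ 2 := by
  refine ⟨hardyConst M r₀ r₁, hardyConst_pos h0 h1, fun ψ hψ => ?_⟩
  have hM1 : M < r₁ := h0.trans h1
  have hd : ∀ x ∈ Ioo M r₁, HasDerivAt ψ (derivWithin ψ (Icc M r₁) x) x := fun x hx =>
    (hψ.differentiableOn one_ne_zero x (Ioo_subset_Icc_self hx)).hasDerivWithinAt.hasDerivAt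
      (Icc_mem_nhds hx.1 hx.2)
  rw [intervalIntegral.integral_congr_Ioo_of_le hM1.le fun x hx => by rw [(hd x hx).deriv]]
  exact integral_sq_le_hardyConst_mul h0 h1 hψ.continuousOn
    (hψ.continuousOn_derivWithin (uniqueDiffOn_Icc hM1) le_rfl) hd
end

section
/- Null geodesics of the extreme Reissner–Nordström metric confined to a sphere of constant radius r = Q (i.e. curves γ(τ) = (t(τ), Q, π/2, φ(τ)) with t, φ affine in τ, satisfying the geodesic equation and g(γ', γ') = 0) exist only for Q = 2M, and then (dt/dτ)²·D(Q) = Q² (dφ/dτ)² with the relation D'(Q) (dt/dτ)² = 2Q (dφ/dτ)² forcing Q = 2M. -/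
/-! At constant radius the two conditions give `Q D'(Q) dt² = 2 Q² dφ² = 2 D(Q) dt²`, and `dt ≠ 0`
because `dφ ≠ 0`, so `Q D'(Q) = 2 D(Q)`. For `D(r) = (1 - M/r)²` this reads
`2 (1 - M/Q) (M/Q) = 2 (1 - M/Q)²`, and dividing by `1 - M/Q ≠ 0` leaves `M/Q = 1 - M/Q`. -/

theorem mul_eq_two_mul_of_circular_null {Q d d' dt dφ : ℝ} (hQ : Q ≠ 0) (hdφ : dφ ≠ 0)
    (hgeo : d' * dt ^ 2 = 2 * Q * dφ ^ 2) (hnull : d * dt ^ 2 = Q ^ 2 * dφ ^ 2) :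
    Q * d' = 2 * d := by
  have hdt : dt ^ 2 ≠ 0 := by
    intro h
    rw [h, mul_zero] at hnull
    exact mul_ne_zero (pow_ne_zero 2 hQ) (pow_ne_zero 2 hdφ) hnull.symm
  apply mul_right_cancel₀ hdt
  calc Q * d' * dt ^ 2 = 2 * (Q ^ 2 * dφ ^ 2) := by rw [mul_assoc, hgeo]; ring
    _ = 2 * d * dt ^ 2 := by rw [← hnull, mul_assoc]

theorem hasDerivAt_one_sub_div_sq (M : ℝ) {r : ℝ} (hr : r ≠ 0) :
    HasDerivAt (fun r => (1 - M / r) ^ 2) (2 * (1 - M / r) * (M / r ^ 2)) r := by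
  have hinner : HasDerivAt (fun r => 1 - M / r) (M / r ^ 2) r := by
    simpa [div_eq_mul_inv, neg_div] using ((hasDerivAt_inv hr).const_mul M).const_sub 1
  exact (hinner.pow 2).congr_deriv (by ring)

theorem eq_two_mul_of_mul_deriv_eq_two_mul {M r : ℝ} (hr : r ≠ 0) (hrM : r ≠ M)
    (h : r * (2 * (1 - M / r) * (M / r ^ 2)) = 2 * (1 - M / r) ^ 2) :
    r = 2 * M := by
  have hu : 1 - M / r ≠ 0 := by
    rw [sub_ne_zero, ne_comm, ne_eq, div_eq_one_iff_eq hr]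
    exact hrM.symm
  have hlin : M / r = 1 - M / r := by
    apply mul_left_cancel₀ (mul_ne_zero two_ne_zero hu)
    calc 2 * (1 - M / r) * (M / r) = r * (2 * (1 - M / r) * (M / r ^ 2)) := by field_simp
      _ = 2 * (1 - M / r) * (1 - M / r) := by rw [h]; ring
  field_simp at hlin
  linarith

/-- Orbiting null geodesics at constant radius Q exist only at the photon sphere
Q = 2M: the r-geodesic equation D'(Q) (dt)² = 2Q (dφ)² together with the null
condition D(Q) (dt)² = Q² (dφ)² force Q = 2M. -/
theorem null_geodesic_constant_radius (M Q dt dφ : ℝ) (hM : 0 < M) (hQ : M < Q)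
    (hdφ : dφ ≠ 0) (D : ℝ → ℝ) (hD : ∀ r, D r = (1 - M / r) ^ 2)
    (hgeo : deriv D Q * dt ^ 2 = 2 * Q * dφ ^ 2)
    (hnull : D Q * dt ^ 2 = Q ^ 2 * dφ ^ 2) :
    Q = 2 * M := by
  have hQ0 : Q ≠ 0 := (hM.trans hQ).ne'
  have hderiv : deriv D Q = 2 * (1 - M / Q) * (M / Q ^ 2) := by
    rw [funext hD]
    exact (hasDerivAt_one_sub_div_sq M hQ0).deriv
  have hphoton := mul_eq_two_mul_of_circular_null hQ0 hdφ hgeo hnull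
  rw [hderiv, hD] at hphoton
  exact eq_two_mul_of_mul_deriv_eq_two_mul hQ0 hQ.ne' hphoton
end

section
/- Let ψ = ψ(v, r) be a smooth spherically symmetric solution of D ∂_r∂_r ψ + 2 ∂_v∂_r ψ + (2/r) ∂_v ψ + R ∂_r ψ = 0 on {r ≥ M}, where D(r) = (1 − M/r)² and R(r) = D'(r) + 2D(r)/r. Then the quantity H[ψ](v) := (∂_r ψ)(v, M) + (1/M) ψ(v, M) is independent of v, i.e. ∂_v H[ψ] = 0. -/
/-- Conservation law along the event horizon r = M of extreme Reissner–Nordström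
for spherically symmetric waves: ∂_r ψ + ψ/M is independent of v on {r = M}. -/
theorem horizon_conservation_law (M : ℝ) (hM : 0 < M) (D R : ℝ → ℝ)
    (hD : ∀ r, D r = (1 - M / r) ^ 2)
    (hR : ∀ r, R r = deriv D r + 2 * D r / r)
    (ψ : ℝ → ℝ → ℝ)
    (hψ : ContDiff ℝ (⊤ : ℕ∞) (fun p : ℝ × ℝ => ψ p.1 p.2))
    (hwave : ∀ v r, M ≤ r →
      D r * deriv (fun r' => deriv (fun r'' => ψ v r'') r') r
        + 2 * deriv (fun v' => deriv (fun r' => ψ v' r') r) v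
        + (2 / r) * deriv (fun v' => ψ v' r) v
        + R r * deriv (fun r' => ψ v r') r = 0) :
    ∀ v : ℝ,
      deriv (fun v' => deriv (fun r' => ψ v' r') M + (1 / M) * ψ v' M) v = 0 := by
  intro v
  have hMne : M ≠ 0 := hM.ne'
  set F : ℝ × ℝ → ℝ := fun p => ψ p.1 p.2 with hF
  -- D M = 0
  have hDM : D M = 0 := by rw [hD]; field_simp; norm_num
  -- deriv D M = 0
  have hDfun : D = fun r => (1 - M / r) ^ 2 := funext hD
  have hDderiv : deriv D M = 0 := by
    have h1 : HasDerivAt (fun r : ℝ => 1 - M / r) (-(M * (-((M:ℝ) ^ 2)⁻¹))) M := by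
      have := ((hasDerivAt_inv hMne).const_mul M)
      simpa [div_eq_mul_inv] using (hasDerivAt_const M (1:ℝ)).fun_sub this
    have h2 : HasDerivAt (fun r : ℝ => (1 - M / r) ^ 2)
        (2 * (1 - M / M) ^ 1 * (-(M * (-((M:ℝ) ^ 2)⁻¹)))) M := by
      simpa using h1.fun_pow 2
    have : (2 * (1 - M / M) ^ 1 * (-(M * (-((M:ℝ) ^ 2)⁻¹)))) = 0 := by
      field_simp
      ring
    rw [hDfun, h2.deriv, this]
  have hRM : R M = 0 := by rw [hR, hDM, hDderiv]; ring
  -- partial derivatives via fderiv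
  have hdiff : Differentiable ℝ F := hψ.differentiable (by simp)
  have hArA : ∀ w r : ℝ, HasDerivAt (fun r' => ψ w r') (fderiv ℝ F (w, r) (0, 1)) r := by
    intro w r
    have hcurve : HasDerivAt (fun r' : ℝ => ((w : ℝ), r')) ((0 : ℝ), (1 : ℝ)) r :=
      (hasDerivAt_const r w).prodMk (hasDerivAt_id r)
    exact (hdiff (w, r)).hasFDerivAt.comp_hasDerivAt r hcurve
  have hA : ∀ w r : ℝ, deriv (fun r' => ψ w r') r = fderiv ℝ F (w, r) (0, 1) :=
    fun w r => (hArA w r).deriv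
  set G : ℝ × ℝ → ℝ := fun p => fderiv ℝ F p (0, 1) with hG
  have hGcd : ContDiff ℝ (⊤ : ℕ∞) G :=
    (hψ.fderiv_right (by simp)).clm_apply contDiff_const
  -- differentiability of the two v-functions
  have hd1 : Differentiable ℝ (fun v' : ℝ => G (v', M)) :=
    (hGcd.differentiable (by simp)).comp (differentiable_id.prodMk (differentiable_const M))
  have hd2 : Differentiable ℝ (fun v' : ℝ => ψ v' M) :=
    hdiff.comp (differentiable_id.prodMk (differentiable_const M))
  -- rewrite the goal
  have hfun : (fun v' : ℝ => deriv (fun r' => ψ v' r') M) = fun v' => G (v', M) :=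
    funext fun w => hA w M
  -- the wave equation at r = M
  have hw := hwave v M le_rfl
  rw [hDM, hRM] at hw
  have hw' : 2 * deriv (fun v' => deriv (fun r' => ψ v' r') M) v
      + (2 / M) * deriv (fun v' => ψ v' M) v = 0 := by linarith
  rw [hfun] at hw'
  calc deriv (fun v' => deriv (fun r' => ψ v' r') M + (1 / M) * ψ v' M) v
      = deriv (fun v' => G (v', M) + (1 / M) * ψ v' M) v := by simp only [hA]; rfl
    _ = deriv (fun v' => G (v', M)) v + deriv (fun v' => (1 / M) * ψ v' M) v := by
        rw [deriv_fun_add (hd1 v) ((hd2.const_mul (1 / M)) v)]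
    _ = deriv (fun v' => G (v', M)) v + (1 / M) * deriv (fun v' => ψ v' M) v := by
        rw [deriv_const_mul _ (hd2 v)]
    _ = 0 := by
        have h2M : (2 : ℝ) / M = 2 * (1 / M) := by ring
        rw [h2M] at hw'
        nlinarith [hw']
end

section
/- Let N = N^v(r) ∂_v + N^r(r) ∂_r be a vector field on extreme Reissner–Nordström that is timelike at the horizon r = M, i.e. g(N, N)|_{r=M} = 2 N^v(M) N^r(M) < 0 with N future directed (N^v > 0). Then N^r(M) ≠ 0, and consequently in the bulk current K^N [ψ] = F_{vv}(∂_v ψ)² + F_{rr}(∂_r ψ)² + F_∇ |∇ψ|² + F_{vr}(∂_v ψ)(∂_r ψ), the coefficient F_{rr} = D[(∂_r N^r)/2 − N^r/r] − N^r D'/2 vanishes at r = M while F_{vr} = D ∂_r N^v − 2N^r/r equals −2N^r(M)/M ≠ 0 at r = M. Hence K^N[ψ] is linear in ∂_r ψ at r = M and fails to be non-negative definite there: there exist values of (∂_v ψ, ∂_r ψ, |∇ψ|) making K^N negative at r = M. -/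
/-!
At the extremal horizon `D = (1 - M/r)²` has a double zero, so both `D` and `D'` vanish at
`r = M`: the `(∂_r ψ)²` coefficient `F_rr` drops out, while the mixed coefficient reduces to
`-2 N^r(M)/M`, which is nonzero because timelikeness `2 N^v N^r < 0` forces `N^r(M) ≠ 0`.
A quadratic form with no `b²` term but a nonzero `ab` term is indefinite.
-/

theorem deriv_sq_eq_zero_of_eq_zero {f : ℝ → ℝ} {x : ℝ} (hf : DifferentiableAt ℝ f x)
    (h0 : f x = 0) : deriv (fun y => f y ^ 2) x = 0 := by
  rw [(hf.hasDerivAt.fun_pow 2).deriv, h0]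
  ring

theorem exists_mul_sq_add_mul_mul_neg (p : ℝ) {s : ℝ} (hs : s ≠ 0) :
    ∃ a b : ℝ, p * a ^ 2 + s * (a * b) < 0 :=
  ⟨1, -(p + 1) / s, by field_simp; linarith⟩

theorem no_redshift_current_general (M : ℝ) (hM : 0 < M) (Nv Nr : ℝ → ℝ)
    (htimelike : 2 * Nv M * Nr M < 0)
    (D Fvv Frr Fgrad Fvr : ℝ → ℝ)
    (hD : ∀ r, D r = (1 - M / r) ^ 2)
    (hFrr : ∀ r, Frr r = D r * (deriv Nr r / 2 - Nr r / r) - Nr r * deriv D r / 2)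
    (hFvr : ∀ r, Fvr r = D r * deriv Nv r - 2 * Nr r / r) :
    Nr M ≠ 0 ∧ Frr M = 0 ∧ Fvr M = -2 * Nr M / M ∧ Fvr M ≠ 0 ∧
      ∃ a b c : ℝ,
        Fvv M * a ^ 2 + Frr M * b ^ 2 + Fgrad M * c ^ 2 + Fvr M * (a * b) < 0 := by
  have hNr : Nr M ≠ 0 := by
    rintro h
    simp [h] at htimelike
  obtain rfl : D = fun r => (1 - M / r) ^ 2 := funext hD
  have hhorizon : 1 - M / M = 0 := by rw [div_self hM.ne']; ring
  have hD' : deriv (fun r => (1 - M / r) ^ 2) M = 0 :=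
    deriv_sq_eq_zero_of_eq_zero (by fun_prop (disch := exact hM.ne')) hhorizon
  have hFrr0 : Frr M = 0 := by simp [hFrr, hD', hhorizon]
  have hFvrM : Fvr M = -2 * Nr M / M := by simp [hFvr, hhorizon]; ring
  have hFvr0 : Fvr M ≠ 0 := by
    rw [hFvrM]
    exact div_ne_zero (mul_ne_zero (by norm_num) hNr) hM.ne'
  obtain ⟨a, b, hab⟩ := exists_mul_sq_add_mul_mul_neg (Fvv M) hFvr0
  exact ⟨hNr, hFrr0, hFvrM, hFvr0, a, b, 0, by simpa [hFrr0] using hab⟩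

/-- No redshift vector field on the degenerate horizon: for any future-directed
timelike φ_τ^T-invariant N = N^v∂_v + N^r∂_r, the bulk term K^N fails to be
non-negative definite at r = M. -/
theorem no_redshift_current (M : ℝ) (hM : 0 < M) (Nv Nr : ℝ → ℝ)
    (hNv : Differentiable ℝ Nv) (hNr : Differentiable ℝ Nr)
    (hfuture : 0 < Nv M) (htimelike : 2 * Nv M * Nr M < 0)
    (D Fvv Frr Fgrad Fvr : ℝ → ℝ)
    (hD : ∀ r, D r = (1 - M / r) ^ 2)
    (hFvv : ∀ r, Fvv r = deriv Nv r)
    (hFrr : ∀ r, Frr r = D r * (deriv Nr r / 2 - Nr r / r) - Nr r * deriv D r / 2)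
    (hFgrad : ∀ r, Fgrad r = -(1 / 2) * deriv Nr r)
    (hFvr : ∀ r, Fvr r = D r * deriv Nv r - 2 * Nr r / r) :
    Nr M ≠ 0 ∧ Frr M = 0 ∧ Fvr M = -2 * Nr M / M ∧ Fvr M ≠ 0 ∧
      ∃ a b c : ℝ,
        Fvv M * a ^ 2 + Frr M * b ^ 2 + Fgrad M * c ^ 2 + Fvr M * (a * b) < 0 :=
  no_redshift_current_general M hM Nv Nr htimelike D Fvv Frr Fgrad Fvr hD hFrr hFvr
end

section
/- Define N^v(r) = 16r, N^r(r) = −(3/2)r + M, h = −1/2, and D(r) = (1 − M/r)², for M ≤ r ≤ 9M/8. Then the quadratic form K(a, b, c) = G_{vv} a² + G_{rr} b² + G_∇ c² + G_{vr} a b, with G_{vv} = ∂_r N^v = 16, G_{rr} = D[(∂_r N^r)/2 − N^r/r] − N^r D'/2 + hD, G_∇ = −(∂_r N^r)/2 + h = 1/4, G_{vr} = D ∂_r N^v − 2N^r/r + 2h = 16D + 2√D, is non-negative definite for every r ∈ [M, 9M/8]; moreover K(a,b,c) ≥ C (a² + √(D(r)) b² + c²) for a constant C > 0 depending only on M. 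-/
/-!
Put `s = √D = 1 - M/r`, so that `s ∈ [0, 1/9]` on `[M, 9M/8]`. The coefficients become
`G_vv = 16`, `G_rr = s(2 - s)/4`, `G_∇ = 1/4` and `G_vr = ε₁ε₂` with `ε₁ = s`, `ε₂ = 16s + 2`.
Since `ε₂² ≤ G_vv - 1/4` and `ε₁² ≤ G_rr - s/4`, subtracting the nonnegative form
`x² + xy + y²` at `x = ε₂a`, `y = ε₁b` leaves at least `(a² + s b² + c²)/4`.
-/

theorem sq_add_mul_add_sq_nonneg (x y : ℝ) : 0 ≤ x ^ 2 + x * y + y ^ 2 := by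
  nlinarith [sq_nonneg (x + y), sq_nonneg x, sq_nonneg y]

theorem sub_sq_mul_sq_add_sub_sq_mul_sq_le (A B ε₁ ε₂ a b : ℝ) :
    (A - ε₂ ^ 2) * a ^ 2 + (B - ε₁ ^ 2) * b ^ 2 ≤ A * a ^ 2 + B * b ^ 2 + ε₁ * ε₂ * (a * b) := by
  nlinarith [sq_add_mul_add_sq_nonneg (ε₂ * a) (ε₁ * b)]

theorem redshift_form_coercive {s : ℝ} (hs₀ : 0 ≤ s) (hs₁ : s ≤ 1 / 9) (a b c : ℝ) :
    1 / 4 * (a ^ 2 + s * b ^ 2 + c ^ 2) ≤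
      16 * a ^ 2 + s * (2 - s) / 4 * b ^ 2 + 1 / 4 * c ^ 2 + s * (16 * s + 2) * (a * b) := by
  have hε₂ : 1 / 4 ≤ 16 - (16 * s + 2) ^ 2 := by nlinarith
  have hε₁ : s / 4 ≤ s * (2 - s) / 4 - s ^ 2 := by nlinarith
  nlinarith [sub_sq_mul_sq_add_sub_sq_mul_sq_le 16 (s * (2 - s) / 4) s (16 * s + 2) a b,
    mul_le_mul_of_nonneg_right hε₂ (sq_nonneg a), mul_le_mul_of_nonneg_right hε₁ (sq_nonneg b)]

theorem one_sub_div_mem_Icc {M r : ℝ} (hM : 0 < M) (hr : r ∈ Set.Icc M (9 * M / 8)) :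
    1 - M / r ∈ Set.Icc 0 (1 / 9) := by
  have hr₀ : 0 < r := hM.trans_le hr.1
  constructor
  · rw [sub_nonneg, div_le_one hr₀]; exact hr.1
  · rw [sub_le_comm, le_div_iff₀ hr₀]; linarith [hr.2]

theorem deriv_one_sub_div_sq (M : ℝ) {r : ℝ} (hr : r ≠ 0) :
    deriv (fun x => (1 - M / x) ^ 2) r = 2 * (1 - M / r) * (M / r ^ 2) := by
  simp only [div_eq_mul_inv]
  rw [((((hasDerivAt_inv hr).const_mul M).const_sub 1).fun_pow 2).deriv]
  ring

/-- Positivity of the modified redshift current K^{N,−1/2} near the degenerate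
horizon (Proposition 9.1): with N^v = 16r, N^r = −(3/2)r + M, h = −1/2, the
quadratic form K is non-negative definite on M ≤ r ≤ 9M/8 and controls
a² + √D b² + c². -/
theorem modified_redshift_positivity (M : ℝ) (hM : 0 < M)
    (D Nv Nr Gvv Grr Ggrad Gvr : ℝ → ℝ) (h : ℝ)
    (hD : ∀ r, D r = (1 - M / r) ^ 2)
    (hNv : ∀ r, Nv r = 16 * r) (hNr : ∀ r, Nr r = -(3 / 2) * r + M) (hh : h = -(1 / 2))
    (hGvv : ∀ r, Gvv r = deriv Nv r)
    (hGrr : ∀ r, Grr r = D r * (deriv Nr r / 2 - Nr r / r) - Nr r * deriv D r / 2 + h * D r)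
    (hGgrad : ∀ r, Ggrad r = -(deriv Nr r) / 2 + h)
    (hGvr : ∀ r, Gvr r = D r * deriv Nv r - 2 * Nr r / r + 2 * h) :
    ∃ C > (0:ℝ), ∀ r ∈ Set.Icc M (9 * M / 8), ∀ a b c : ℝ,
      0 ≤ Gvv r * a ^ 2 + Grr r * b ^ 2 + Ggrad r * c ^ 2 + Gvr r * (a * b) ∧
      C * (a ^ 2 + Real.sqrt (D r) * b ^ 2 + c ^ 2) ≤
        Gvv r * a ^ 2 + Grr r * b ^ 2 + Ggrad r * c ^ 2 + Gvr r * (a * b) := by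
  refine ⟨1 / 4, by norm_num, fun r hr a b c => ?_⟩
  have hr₀ : r ≠ 0 := (hM.trans_le hr.1).ne'
  obtain ⟨hs₀, hs₁⟩ := one_sub_div_mem_Icc hM hr
  have hdNv : deriv Nv r = 16 := by simp [funext hNv]
  have hdNr : deriv Nr r = -(3 / 2) := by simp [funext hNr]
  have hdD : deriv D r = 2 * (1 - M / r) * (M / r ^ 2) := by
    rw [funext hD]; exact deriv_one_sub_div_sq M hr₀
  set s := 1 - M / r with hs
  have hMr : M = r * (1 - s) := by rw [hs]; field_simp; ring
  have hGrr' : Grr r = s * (2 - s) / 4 := by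
    rw [hGrr, hdNr, hdD, hD, hNr, hh, hMr]; field_simp; ring
  have hGvr' : Gvr r = s * (16 * s + 2) := by
    rw [hGvr, hdNv, hD, hNr, hh, hMr]; field_simp; ring
  have hGgrad' : Ggrad r = 1 / 4 := by rw [hGgrad, hdNr, hh]; norm_num
  have hsqrt : Real.sqrt (D r) = s := by rw [hD, Real.sqrt_sq hs₀]
  have hcoercive := redshift_form_coercive hs₀ hs₁ a b c
  rw [hGvv, hdNv, hGgrad', hGrr', hGvr', hsqrt]
  exact ⟨(by positivity : (0 : ℝ) ≤ _).trans hcoercive, hcoercive⟩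
end
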